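/- arXiv:1106.0105 — 8 statements merged into one kernel-verified Lean document; each statement's English description precedes it below -/
import Mathlib

section
/- If S_n is a sum of independent random variables T_1,...,T_n with T_j exponentially distributed with rate j, then for every t ≥ 0 the probability P(S_n ≤ t) equals e^{-nt}(e^t - 1)^n. -/
open MeasureTheory ProbabilityTheory Real Set

/-!
Induction on `n`: by independence the law of `S_{n+1} = S_n + T_{n+1}` is the convolution of the
law of `S_n` with `Exp(n+1)`, so `P(S_{n+1} ≤ t) = ∫ P(S_n ≤ t - y) (n+1) e^{-(n+1)y} dy`.
With `P(S_n ≤ s) = (1 - e^{-s})^n` for `s ≥ 0` (and `0` for `s < 0`), the integrand on `[0, t]`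
is the derivative in `y` of `-(e^{-y} - e^{-t})^{n+1}`, which integrates to `(1 - e^{-t})^{n+1}`.
-/

namespace MeasureTheory.Measure

lemma conv_Iic {μ ν : Measure ℝ} [SFinite μ] [SFinite ν] (t : ℝ) :
    (μ ∗ ν) (Iic t) = ∫⁻ y, μ (Iic (t - y)) ∂ν := by
  rw [conv, map_apply measurable_add measurableSet_Iic,
    prod_apply_symm (measurable_add measurableSet_Iic)]
  congr with y
  congr 1
  ext x
  simp [le_sub_iff_add_le]

/-- `iterConv μ n = μ 0 ∗ ⋯ ∗ μ (n - 1)`. -/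
noncomputable def iterConv (μ : ℕ → Measure ℝ) : ℕ → Measure ℝ
  | 0 => dirac 0
  | n + 1 => iterConv μ n ∗ μ n

instance (μ : ℕ → Measure ℝ) [∀ k, SFinite (μ k)] (n : ℕ) :
    SFinite (iterConv μ n) := by
  induction n with
  | zero => rw [iterConv]; infer_instance
  | succ n ih => rw [iterConv]; infer_instance

end MeasureTheory.Measure

open Measure

theorem ProbabilityTheory.iIndepFun.map_sum_eq_iterConv {Ω : Type*} [MeasurableSpace Ω]
    {P : Measure Ω} [IsProbabilityMeasure P] {μ : ℕ → Measure ℝ} :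
    ∀ {n : ℕ} {T : Fin n → Ω → ℝ}, (∀ j, Measurable (T j)) → iIndepFun T P →
      (∀ j : Fin n, P.map (T j) = μ j) → P.map (∑ j, T j) = iterConv μ n
  | 0, T, _, _, _ => by simp [iterConv, Pi.zero_def, Measure.map_const]
  | n + 1, T, hmeas, hindep, hlaw => by
    have hindep_last : IndepFun (∑ j : Fin n, T j.castSucc) (T (Fin.last n)) P := by
      simpa [Finset.sum_map] using hindep.indepFun_finsetSum_of_notMem hmeas
        (s := Finset.univ.map Fin.castSuccEmb) (i := Fin.last n) (by simp)
    have hmeas_init : Measurable (∑ j : Fin n, T j.castSucc) := by fun_prop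
    rw [Fin.sum_univ_castSucc, hindep_last.map_add_eq_map_conv_map hmeas_init (hmeas _),
      iterConv, hlaw, map_sum_eq_iterConv (fun j => hmeas _)
        (hindep.precomp (Fin.castSucc_injective n)) (fun j => hlaw _)]
    rfl

instance (r : ℝ) : SFinite (expMeasure r) := by
  unfold expMeasure gammaMeasure
  infer_instance

lemma hasDerivAt_neg_exp_neg_sub_exp_neg_pow (n : ℕ) (t y : ℝ) :
    HasDerivAt (fun y => -(exp (-y) - exp (-t)) ^ (n + 1))
      ((n + 1) * exp (-((n + 1) * y)) * (1 - exp (-(t - y))) ^ n) y := by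
  have hbase : HasDerivAt (fun y => exp (-y) - exp (-t)) (-exp (-y)) y := by
    simpa using (hasDerivAt_neg y).exp.sub_const (exp (-t))
  refine (hbase.pow (n + 1)).neg.congr_deriv ?_
  have hexp : exp (-((n + 1) * y)) = exp (-y) ^ n * exp (-y) := by
    rw [← exp_nat_mul, ← exp_add]
    ring_nf
  have hshift : exp (-y) * (1 - exp (-(t - y))) = exp (-y) - exp (-t) := by
    rw [mul_sub, ← exp_add]
    ring_nf
  rw [hexp, ← hshift, mul_pow]
  push_cast
  ring

lemma integral_exp_mul_one_sub_exp_pow (n : ℕ) (t : ℝ) :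
    ∫ y in (0)..t, (n + 1) * exp (-((n + 1) * y)) * (1 - exp (-(t - y))) ^ n
      = (1 - exp (-t)) ^ (n + 1) := by
  rw [intervalIntegral.integral_eq_sub_of_hasDerivAt
    (fun y _ => hasDerivAt_neg_exp_neg_sub_exp_neg_pow n t y)
    (Continuous.intervalIntegrable (by fun_prop) _ _)]
  simp

/-- The CDF of the maximum of `n` independent `Exp(1)` variables. -/
noncomputable def expMaxCDF (n : ℕ) (t : ℝ) : ℝ := if 0 ≤ t then (1 - exp (-t)) ^ n else 0

@[fun_prop]
lemma measurable_expMaxCDF (n : ℕ) : Measurable (expMaxCDF n) :=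
  Measurable.ite measurableSet_Ici (by fun_prop) measurable_const

lemma one_sub_exp_neg_nonneg {t : ℝ} (ht : 0 ≤ t) : 0 ≤ 1 - exp (-t) :=
  sub_nonneg.2 (exp_le_one_iff.2 (neg_nonpos.2 ht))

lemma lintegral_expMaxCDF_sub (n : ℕ) (t : ℝ) :
    ∫⁻ y, ENNReal.ofReal (expMaxCDF n (t - y)) ∂expMeasure (n + 1)
      = ENNReal.ofReal (expMaxCDF (n + 1) t) := by
  set g : ℝ → ℝ := fun y => (n + 1) * exp (-((n + 1) * y)) * (1 - exp (-(t - y))) ^ n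
  set f := exponentialPDF (n + 1) * fun y => ENNReal.ofReal (expMaxCDF n (t - y))
  have hsupp : Function.support f ⊆ Icc 0 t := by
    refine Function.support_subset_iff'.2 fun y hy => ?_
    rcases not_and_or.1 hy with hy0 | hyt
    · simp [f, exponentialPDF_of_neg (not_le.1 hy0)]
    · have : expMaxCDF n (t - y) = 0 := if_neg (by linarith [not_le.1 hyt])
      simp [f, this]
  have hfg : EqOn f (fun y => ENNReal.ofReal (g y)) (Icc 0 t) := by
    intro y ⟨hy0, hyt⟩
    simp only [f, g, Pi.mul_apply, exponentialPDF_of_nonneg hy0, expMaxCDF,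
      if_pos (sub_nonneg.2 hyt)]
    rw [← ENNReal.ofReal_mul (by positivity)]
  have hpdf : Measurable (exponentialPDF ((n : ℝ) + 1)) :=
    (measurable_exponentialPDFReal _).ennreal_ofReal
  change ∫⁻ y, _ ∂(volume.withDensity (exponentialPDF (n + 1))) = _
  rw [lintegral_withDensity_eq_lintegral_mul _ hpdf (by fun_prop),
    ← setLIntegral_eq_of_support_subset hsupp, setLIntegral_congr_fun measurableSet_Icc hfg]
  by_cases ht : 0 ≤ t
  · have hg_nonneg : ∀ y ∈ Icc 0 t, 0 ≤ g y := fun y hy => by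
      have := one_sub_exp_neg_nonneg (sub_nonneg.2 hy.2)
      positivity
    rw [← ofReal_integral_eq_lintegral_ofReal (by fun_prop : Continuous g).integrableOn_Icc
        ((ae_restrict_iff' measurableSet_Icc).2 (ae_of_all _ hg_nonneg)),
      integral_Icc_eq_integral_Ioc, ← intervalIntegral.integral_of_le ht,
      integral_exp_mul_one_sub_exp_pow, expMaxCDF, if_pos ht]
  · simp [expMaxCDF, ht]

lemma iterConv_expMeasure_Iic (n : ℕ) (t : ℝ) :
    iterConv (fun k => expMeasure (k + 1)) n (Iic t) = ENNReal.ofReal (expMaxCDF n t) := by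
  induction n generalizing t with
  | zero => by_cases ht : 0 ≤ t <;> simp [iterConv, expMaxCDF, ht]
  | succ n ih =>
    rw [iterConv, conv_Iic]
    simp_rw [ih]
    exact_mod_cast lintegral_expMaxCDF_sub n t

theorem prob_sum_exponential_le_general (n : ℕ)
    {Ω : Type*} [MeasurableSpace Ω] (P : Measure Ω) [IsProbabilityMeasure P]
    (T : Fin n → Ω → ℝ) (hmeas : ∀ j, Measurable (T j))
    (hindep : iIndepFun T P)
    (hlaw : ∀ j : Fin n, Measure.map (T j) P = expMeasure ((j : ℕ) + 1))
    (t : ℝ) (ht : 0 ≤ t) :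
    P {ω | ∑ j, T j ω ≤ t} = ENNReal.ofReal (exp (-(n : ℝ) * t) * (exp t - 1) ^ n) := by
  have hevent : {ω | ∑ j, T j ω ≤ t} = (∑ j, T j) ⁻¹' Iic t := by
    ext ω
    simp [Finset.sum_apply]
  have hcdf : (1 - exp (-t)) ^ n = exp (-(n : ℝ) * t) * (exp t - 1) ^ n := by
    rw [neg_mul, ← mul_neg, exp_nat_mul, ← mul_pow, mul_sub, ← exp_add, neg_add_cancel, exp_zero,
      mul_one]
  rw [hevent, ← map_apply (by fun_prop) measurableSet_Iic,
    hindep.map_sum_eq_iterConv (μ := fun k => expMeasure (k + 1)) hmeas hlaw,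
    iterConv_expMeasure_Iic, expMaxCDF, if_pos ht, hcdf]

/-- If `S_n = T_1 + ... + T_n` is a sum of independent random variables with
`T_j ~ Exp(j)`, then `P(S_n ≤ t) = e^{-nt} (e^t - 1)^n` for every `t ≥ 0`. -/
theorem prob_sum_exponential_le (n : ℕ) (hn : 1 ≤ n)
    {Ω : Type*} [MeasurableSpace Ω] (P : Measure Ω) [IsProbabilityMeasure P]
    (T : Fin n → Ω → ℝ) (hmeas : ∀ j, Measurable (T j))
    (hindep : iIndepFun T P)
    (hlaw : ∀ j : Fin n, Measure.map (T j) P = expMeasure ((j : ℕ) + 1))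
    (t : ℝ) (ht : 0 ≤ t) :
    P {ω | ∑ j, T j ω ≤ t} = ENNReal.ofReal (exp (-(n : ℝ) * t) * (exp t - 1) ^ n) :=
  prob_sum_exponential_le_general n P T hmeas hindep hlaw t ht
end

section
/- If S_n is a sum of independent exponential random variables T_j ~ Exp(j), j=1,...,n, then the density of S_n at x ≥ 0 is n e^{-nx}(e^x - 1)^{n-1}. -/
open MeasureTheory ProbabilityTheory Real
open scoped ENNReal

/-! Induct on `n`. Since `T_{n+1}` is independent of `S_n`, the density of `S_{n+1}` is the
convolution of that of `S_n` with the `Exp(n+1)` density. In this convolution the factor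
`e^{-nx}` combines with `e^{-(n+1)(z-x)}` into `e^{-(n+1)z} e^x`, and what is left to integrate
over `[0, z]` is `n (e^x - 1)^{n-1} e^x`, the derivative of `(e^x - 1)^n`. -/

lemma measurable_exponentialPDF (r : ℝ) : Measurable (exponentialPDF r) :=
  (measurable_exponentialPDFReal r).ennreal_ofReal

lemma expMeasure_eq_withDensity (r : ℝ) : expMeasure r = volume.withDensity (exponentialPDF r) :=
  rfl

noncomputable def sumExpPDF (n : ℕ) (x : ℝ) : ℝ≥0∞ :=
  ENNReal.ofReal (if 0 ≤ x then (n : ℝ) * exp (-(n : ℝ) * x) * (exp x - 1) ^ (n - 1) else 0)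

lemma measurable_sumExpPDF (n : ℕ) : Measurable (sumExpPDF n) := by
  unfold sumExpPDF
  exact (Measurable.ite measurableSet_Ici (by fun_prop) measurable_const).ennreal_ofReal

lemma sumExpPDF_one : sumExpPDF 1 = exponentialPDF 1 := by
  ext x
  simp [sumExpPDF, exponentialPDF_eq]

lemma sumExpPDF_of_neg (n : ℕ) {x : ℝ} (hx : x < 0) : sumExpPDF n x = 0 := by
  simp [sumExpPDF, hx.not_ge]

lemma sumExpPDF_mul_exponentialPDF (n : ℕ) (x z : ℝ) :
    sumExpPDF n x * exponentialPDF (n + 1) (z - x)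
      = (Set.Icc 0 z).indicator (fun x => ENNReal.ofReal
          ((n + 1) * exp (-(n + 1) * z) * (n * (exp x - 1) ^ (n - 1) * exp x))) x := by
  by_cases hx : x ∈ Set.Icc 0 z
  · rw [Set.indicator_of_mem hx]
    obtain ⟨hx0, hxz⟩ := hx
    have : 0 ≤ exp x - 1 := sub_nonneg.mpr (one_le_exp hx0)
    rw [sumExpPDF, if_pos hx0,
      exponentialPDF_of_nonneg (sub_nonneg.mpr hxz), ← ENNReal.ofReal_mul (by positivity)]
    congr 1
    have hexp : exp (-n * x) * exp (-((n + 1) * (z - x))) = exp (-(n + 1) * z) * exp x := by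
      rw [← exp_add, ← exp_add]; ring_nf
    linear_combination (n * (n + 1) * (exp x - 1) ^ (n - 1)) * hexp
  · rw [Set.indicator_of_notMem hx]
    rcases not_and_or.mp hx with hx0 | hxz
    · rw [sumExpPDF_of_neg n (not_le.mp hx0), zero_mul]
    · rw [exponentialPDF_of_neg (by linarith [not_le.mp hxz]), mul_zero]

lemma integral_Icc_deriv_exp_sub_one_pow {n : ℕ} (hn : n ≠ 0) {z : ℝ} (hz : 0 ≤ z) :
    ∫ x in Set.Icc 0 z, n * (exp x - 1) ^ (n - 1) * exp x = (exp z - 1) ^ n := by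
  rw [integral_Icc_eq_integral_Ioc, ← intervalIntegral.integral_of_le hz,
    intervalIntegral.integral_eq_sub_of_hasDerivAt
      (fun x _ => ((hasDerivAt_exp x).sub_const 1).pow n)
      ((by fun_prop : Continuous _).intervalIntegrable _ _)]
  simp [hn]

lemma sumExpPDF_lconvolution_exponentialPDF {n : ℕ} (hn : n ≠ 0) :
    sumExpPDF n ⋆ₗ exponentialPDF (n + 1) = sumExpPDF (n + 1) := by
  ext z
  simp_rw [lconvolution_def, neg_add_eq_sub, sumExpPDF_mul_exponentialPDF]
  rcases lt_or_ge z 0 with hz | hz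
  · simp [Set.Icc_eq_empty_of_lt hz, sumExpPDF_of_neg _ hz]
  rw [lintegral_indicator measurableSet_Icc, ← ofReal_integral_eq_lintegral_ofReal,
    integral_const_mul, integral_Icc_deriv_exp_sub_one_pow hn hz]
  · simp [sumExpPDF, hz]
  · exact (by fun_prop : Continuous _).integrableOn_Icc
  · refine ae_restrict_of_forall_mem measurableSet_Icc fun x hx => ?_
    have : 0 ≤ exp x - 1 := sub_nonneg.mpr (one_le_exp hx.1)
    positivity

lemma iIndepFun.map_sum_castSucc_eq_conv {Ω M : Type*} [MeasurableSpace Ω] {P : Measure Ω}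
    [IsFiniteMeasure P] [AddCommMonoid M] [MeasurableSpace M] [MeasurableAdd₂ M] {n : ℕ}
    {T : Fin (n + 1) → Ω → M} (hindep : iIndepFun T P) (hmeas : ∀ j, Measurable (T j)) :
    P.map (fun ω => ∑ j, T j ω)
      = P.map (fun ω => ∑ j : Fin n, T j.castSucc ω) ∗ P.map (T (Fin.last n)) := by
  have hlast : Fin.last n ∉ Finset.univ.map Fin.castSuccEmb := by simp
  have hindep_last := hindep.indepFun_finsetSum_of_notMem hmeas hlast
  rw [Finset.sum_map, Finset.sum_fn] at hindep_last
  have hsum : (fun ω => ∑ j, T j ω) = (fun ω => ∑ j : Fin n, T j.castSucc ω) + T (Fin.last n) := by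
    ext ω
    simp [Fin.sum_univ_castSucc]
  rw [hsum]
  exact hindep_last.map_add_eq_map_conv_map (by fun_prop) (hmeas _)

/-- If `S_n = T_1 + ... + T_n` is a sum of independent random variables with
`T_j ~ Exp(j)`, then the law of `S_n` has density `n e^{-nx} (e^x - 1)^{n-1}`
on `[0, ∞)` with respect to Lebesgue measure. -/
theorem density_sum_exponential (n : ℕ) (hn : 1 ≤ n)
    {Ω : Type*} [MeasurableSpace Ω] (P : Measure Ω) [IsProbabilityMeasure P]
    (T : Fin n → Ω → ℝ) (hmeas : ∀ j, Measurable (T j))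
    (hindep : iIndepFun T P)
    (hlaw : ∀ j : Fin n, Measure.map (T j) P = expMeasure ((j : ℕ) + 1)) :
    Measure.map (fun ω => ∑ j, T j ω) P
      = volume.withDensity (fun x =>
          ENNReal.ofReal (if 0 ≤ x then
            (n : ℝ) * exp (-(n : ℝ) * x) * (exp x - 1) ^ (n - 1) else 0)) := by
  change _ = volume.withDensity (sumExpPDF n)
  induction n, hn using Nat.le_induction with
  | base =>
    simp only [Fin.sum_univ_one]
    rw [hlaw, sumExpPDF_one, expMeasure_eq_withDensity]
    norm_num
  | succ n hn ih =>
    have hlaw_init (j : Fin n) : P.map (T j.castSucc) = expMeasure ((j : ℕ) + 1) := by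
      simpa using hlaw j.castSucc
    rw [iIndepFun.map_sum_castSucc_eq_conv hindep hmeas,
      ih _ (fun j => hmeas _) (hindep.precomp (Fin.castSucc_injective n)) hlaw_init,
      hlaw, Fin.val_last, expMeasure_eq_withDensity,
      conv_withDensity_eq_lconvolution (measurable_sumExpPDF n)
        (measurable_exponentialPDF _),
      sumExpPDF_lconvolution_exponentialPDF (by omega)]
end

section
/- Let T_1, T_2, ... be independent with T_j ~ Exp(j) and let N_t = max{n : T_1 + ... + T_n ≤ t} (with N_t = 0 if T_1 > t). Then for every k ≥ 0, P(N_t = k) = e^{-t}(1 - e^{-t})^k; that is, N_t is geometrically distributed with parameter e^{-t}. -/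
/-!
The partial sum `S_n = T_0 + ⋯ + T_{n-1}` has distribution function `(1 - e^{-s})^n` on `s ≥ 0`:
convolving with `Exp(n + 1)` turns it into
`∫₀ˢ (n + 1) (e^{-y} - e^{-s})^n e^{-y} dy = (1 - e^{-s})^{n+1}`.
The `T_j` are a.s. nonnegative and `P(S_n ≤ t) → 0`, so almost surely `n ≤ N_t` exactly when
`S_n ≤ t`, and `P(N_t = k) = (1 - e^{-t})^k - (1 - e^{-t})^{k+1}`.
-/

open MeasureTheory ProbabilityTheory Real Set Filter Topology

lemma Nat.le_sSup_iff_of_antitone {p : ℕ → Prop} (hp : Antitone p) (h0 : p 0)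
    (hbdd : ∃ n, ¬ p n) (k : ℕ) : k ≤ sSup {n | p n} ↔ p k := by
  have hbdd' : BddAbove {n | p n} := by
    obtain ⟨n, hn⟩ := hbdd
    exact ⟨n, fun m hm => le_of_not_gt fun hnm => hn (hp hnm.le hm)⟩
  exact ⟨fun hk => hp hk (Nat.sSup_mem ⟨0, h0⟩ hbdd'), fun hk => le_csSup hbdd' hk⟩

lemma MeasureTheory.measure_iInter_eq_zero_of_tendsto {α ι : Type*} [MeasurableSpace α]
    {μ : Measure α} {l : Filter ι} [l.NeBot] {s : ι → Set α}
    (h : Tendsto (fun i => μ (s i)) l (𝓝 0)) : μ (⋂ i, s i) = 0 :=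
  le_antisymm (ge_of_tendsto' h fun i => measure_mono (iInter_subset s i)) bot_le

lemma MeasureTheory.measure_eq_sub_measure_succ_le {Ω : Type*} [MeasurableSpace Ω]
    {P : Measure Ω} [IsFiniteMeasure P] {N : Ω → ℕ} {k : ℕ}
    (hk : NullMeasurableSet {ω | k + 1 ≤ N ω} P) :
    P {ω | N ω = k} = P {ω | k ≤ N ω} - P {ω | k + 1 ≤ N ω} := by
  have hsub : {ω | k + 1 ≤ N ω} ⊆ {ω | k ≤ N ω} := fun _ h => Nat.le_of_succ_le h
  rw [← measure_sdiff hsub hk (measure_ne_top _ _)]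
  congr 1 with ω
  simp only [Set.mem_sdiff, mem_ofPred_eq, not_le]
  omega

lemma MeasureTheory.Measure.conv_Iic_s4 (μ ν : Measure ℝ) [SFinite ν] (s : ℝ) :
    (μ ∗ ν) (Iic s) = ∫⁻ x, ν (Iic (s - x)) ∂μ := by
  rw [← lintegral_indicator_one measurableSet_Iic,
    Measure.lintegral_conv (measurable_one.indicator measurableSet_Iic)]
  congr 1 with x
  rw [← lintegral_indicator_one measurableSet_Iic]
  congr 1 with y
  simp only [indicator, mem_Iic, Pi.one_apply, le_sub_iff_add_le']

lemma ae_nonneg_of_map_eq_expMeasure {Ω : Type*} [MeasurableSpace Ω] {P : Measure Ω}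
    {X : Ω → ℝ} (hX : AEMeasurable X P) {r : ℝ} (hlaw : P.map X = expMeasure r) :
    0 ≤ᵐ[P] X := by
  have h : ∀ᵐ x ∂expMeasure r, 0 ≤ x := by
    rw [show expMeasure r = volume.withDensity (exponentialPDF r) from rfl,
      ae_withDensity_iff (f := exponentialPDF r) (measurable_exponentialPDFReal r).ennreal_ofReal]
    exact ae_of_all _ fun x hx => not_lt.1 fun hneg => hx (exponentialPDF_of_neg hneg)
  exact ae_of_ae_map hX (hlaw ▸ h)

/-- The distribution function of the maximum of `n` independent `Exp(1)` variables, which by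
Rényi's representation is also that of `T₀ + ⋯ + Tₙ₋₁`. -/
noncomputable def cdfMaxExp (n : ℕ) (s : ℝ) : ℝ := if 0 ≤ s then (1 - exp (-s)) ^ n else 0

lemma measurable_cdfMaxExp (n : ℕ) : Measurable (cdfMaxExp n) :=
  Measurable.ite measurableSet_Ici (by fun_prop) measurable_const

lemma integral_succ_mul_pow_exp_neg_sub (n : ℕ) (s : ℝ) :
    ∫ y in (0 : ℝ)..s, ((n : ℝ) + 1) * (exp (-y) - exp (-s)) ^ n * exp (-y)
      = (1 - exp (-s)) ^ (n + 1) := by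
  have hderiv : ∀ y ∈ uIcc (0 : ℝ) s, HasDerivAt (fun y => -(exp (-y) - exp (-s)) ^ (n + 1))
      (((n : ℝ) + 1) * (exp (-y) - exp (-s)) ^ n * exp (-y)) y := by
    intro y _
    have hbase : HasDerivAt (fun y => exp (-y) - exp (-s)) (exp (-y) * (-1)) y :=
      ((hasDerivAt_id y).neg.exp).sub_const _
    exact (hbase.pow (n + 1)).neg.congr_deriv (by push_cast; ring)
  have hcont : Continuous fun y => ((n : ℝ) + 1) * (exp (-y) - exp (-s)) ^ n * exp (-y) := by
    fun_prop
  rw [intervalIntegral.integral_eq_sub_of_hasDerivAt hderiv (hcont.intervalIntegrable 0 s)]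
  simp

lemma exponentialPDFReal_mul_cdfMaxExp_sub (n : ℕ) (s y : ℝ) :
    exponentialPDFReal ((n : ℝ) + 1) y * cdfMaxExp n (s - y)
      = (Icc 0 s).indicator
          (fun y => ((n : ℝ) + 1) * (exp (-y) - exp (-s)) ^ n * exp (-y)) y := by
  by_cases hy : y ∈ Icc 0 s
  · rw [indicator_of_mem hy, exponentialPDFReal, gammaPDFReal, cdfMaxExp,
      if_pos hy.1, if_pos (sub_nonneg.2 hy.2)]
    have hsplit : exp (-((n + 1) * y)) = exp (-y) ^ n * exp (-y) := by
      rw [← exp_nat_mul, ← exp_add]; ring_nf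
    have hfactor : exp (-y) * (1 - exp (-(s - y))) = exp (-y) - exp (-s) := by
      rw [mul_one_sub, ← exp_add]; ring_nf
    simp only [rpow_one, sub_self, rpow_zero, Gamma_one, div_one]
    rw [hsplit, ← hfactor, mul_pow]
    ring
  · rw [indicator_of_notMem hy]
    rcases not_and_or.1 hy with hneg | hgt
    · rw [exponentialPDFReal, gammaPDFReal, if_neg hneg, zero_mul]
    · rw [cdfMaxExp, if_neg (by linarith), mul_zero]

lemma lintegral_cdfMaxExp_sub_expMeasure (n : ℕ) (s : ℝ) :
    ∫⁻ y, ENNReal.ofReal (cdfMaxExp n (s - y)) ∂expMeasure ((n : ℝ) + 1)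
      = ENNReal.ofReal (cdfMaxExp (n + 1) s) := by
  set G : ℝ → ℝ := fun y => ((n : ℝ) + 1) * (exp (-y) - exp (-s)) ^ n * exp (-y)
  have hdensity : ∀ y, exponentialPDF ((n : ℝ) + 1) y * ENNReal.ofReal (cdfMaxExp n (s - y))
      = (Icc 0 s).indicator (fun y => ENNReal.ofReal (G y)) y := by
    intro y
    rw [exponentialPDF, ← ENNReal.ofReal_mul (exponentialPDFReal_nonneg (by positivity) y),
      exponentialPDFReal_mul_cdfMaxExp_sub]
    by_cases hy : y ∈ Icc 0 s <;> simp [hy, G]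
  have hmeas : Measurable fun y => ENNReal.ofReal (cdfMaxExp n (s - y)) :=
    ((measurable_cdfMaxExp n).comp (measurable_const.sub measurable_id)).ennreal_ofReal
  rw [show expMeasure ((n : ℝ) + 1) = volume.withDensity (exponentialPDF ((n : ℝ) + 1)) from rfl,
    lintegral_withDensity_eq_lintegral_mul (f := exponentialPDF ((n : ℝ) + 1)) _
      (measurable_exponentialPDFReal _).ennreal_ofReal hmeas]
  simp only [Pi.mul_apply, hdensity]
  rw [lintegral_indicator measurableSet_Icc, cdfMaxExp]
  split_ifs with hs
  · have hG_nonneg : ∀ y ∈ Icc 0 s, 0 ≤ G y := fun y hy =>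
      mul_nonneg (mul_nonneg (by positivity)
        (pow_nonneg (sub_nonneg.2 (exp_le_exp.2 (neg_le_neg hy.2))) n)) (exp_pos _).le
    rw [← ofReal_integral_eq_lintegral_ofReal (by fun_prop : Continuous G).integrableOn_Icc
      ((ae_restrict_iff' measurableSet_Icc).2 (ae_of_all _ hG_nonneg)),
      integral_Icc_eq_integral_Ioc, ← intervalIntegral.integral_of_le hs,
      integral_succ_mul_pow_exp_neg_sub]
  · rw [Icc_eq_empty (by linarith), Measure.restrict_empty, lintegral_zero_measure,
      ENNReal.ofReal_zero]

lemma map_sum_range_Iic {Ω : Type*} [MeasurableSpace Ω] {P : Measure Ω} [IsProbabilityMeasure P]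
    {T : ℕ → Ω → ℝ} (hmeas : ∀ j, Measurable (T j)) (hindep : iIndepFun T P)
    (hlaw : ∀ j : ℕ, P.map (T j) = expMeasure ((j : ℝ) + 1)) (n : ℕ) (s : ℝ) :
    P.map (∑ j ∈ Finset.range n, T j) (Iic s) = ENNReal.ofReal (cdfMaxExp n s) := by
  induction n generalizing s with
  | zero =>
    rw [Finset.sum_range_zero, Pi.zero_def, Measure.map_const, measure_univ, one_smul]
    by_cases hs : 0 ≤ s <;> simp [cdfMaxExp, hs]
  | succ n ih =>
    have := isProbabilityMeasure_expMeasure (r := (n : ℝ) + 1) (by positivity)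
    have hS : Measurable (∑ j ∈ Finset.range n, T j) := by fun_prop
    rw [Finset.sum_range_succ,
      (hindep.indepFun_sum_range_succ hmeas n).map_add_eq_map_conv_map hS (hmeas n), hlaw n,
      Measure.conv_comm, Measure.conv_Iic_s4]
    simp_rw [ih]
    exact lintegral_cdfMaxExp_sub_expMeasure n s

lemma measure_sum_range_le {Ω : Type*} [MeasurableSpace Ω] {P : Measure Ω}
    [IsProbabilityMeasure P] {T : ℕ → Ω → ℝ} (hmeas : ∀ j, Measurable (T j))
    (hindep : iIndepFun T P) (hlaw : ∀ j : ℕ, P.map (T j) = expMeasure ((j : ℝ) + 1))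
    (n : ℕ) (s : ℝ) :
    P {ω | ∑ j ∈ Finset.range n, T j ω ≤ s} = ENNReal.ofReal (cdfMaxExp n s) := by
  rw [← map_sum_range_Iic hmeas hindep hlaw, Measure.map_apply (by fun_prop) measurableSet_Iic]
  congr 1 with ω
  simp [Finset.sum_apply]

/-- Let `T_1, T_2, ...` be independent with `T_j ~ Exp(j)` (here `T j` has rate
`j + 1`, representing `T_{j+1}`), and let
`N_t = max {n | T_1 + ... + T_n ≤ t}` (so `N_t = 0` if `T_1 > t`).
Then `P(N_t = k) = e^{-t} (1 - e^{-t})^k` for every `k ≥ 0`, i.e. `N_t` is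
geometrically distributed with parameter `e^{-t}`. -/
theorem geometric_number_of_jumps
    {Ω : Type*} [MeasurableSpace Ω] (P : Measure Ω) [IsProbabilityMeasure P]
    (T : ℕ → Ω → ℝ) (hmeas : ∀ j, Measurable (T j))
    (hindep : iIndepFun T P)
    (hlaw : ∀ j : ℕ, Measure.map (T j) P = expMeasure ((j : ℝ) + 1))
    (t : ℝ) (ht : 0 ≤ t)
    (N : Ω → ℕ)
    (hN : ∀ ω, N ω = sSup {n : ℕ | ∑ j ∈ Finset.range n, T j ω ≤ t})
    (k : ℕ) :
    P {ω | N ω = k} = ENNReal.ofReal (exp (-t) * (1 - exp (-t)) ^ k) := by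
  set S : ℕ → Ω → ℝ := fun n ω => ∑ j ∈ Finset.range n, T j ω
  have hc : 0 ≤ 1 - exp (-t) := by simpa using neg_nonpos.2 ht
  have hcdf : ∀ n, P {ω | S n ω ≤ t} = ENNReal.ofReal ((1 - exp (-t)) ^ n) := fun n => by
    simpa [cdfMaxExp, ht] using measure_sum_range_le hmeas hindep hlaw n t
  have hmono : ∀ᵐ ω ∂P, Monotone fun n => S n ω := by
    filter_upwards [ae_all_iff.2 fun j => ae_nonneg_of_map_eq_expMeasure
      (hmeas j).aemeasurable (hlaw j)] with ω hω
    exact fun m n hmn => Finset.sum_le_sum_of_subset_of_nonneg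
      (Finset.range_subset_range.2 hmn) fun j _ _ => hω j
  have hescape : ∀ᵐ ω ∂P, ∃ n, ¬ S n ω ≤ t := by
    rw [ae_iff]
    simp only [not_exists, not_not, ofPred_forall]
    refine measure_iInter_eq_zero_of_tendsto (l := atTop) ?_
    simpa [hcdf] using ENNReal.tendsto_ofReal
      (tendsto_pow_atTop_nhds_zero_of_lt_one hc (by simp [exp_pos]))
  have hge : ∀ n, {ω | n ≤ N ω} =ᵐ[P] {ω | S n ω ≤ t} := fun n => by
    rw [eventuallyEq_set]
    filter_upwards [hmono, hescape] with ω hω hesc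
    rw [hN ω]
    exact Nat.le_sSup_iff_of_antitone (fun _ _ hmn h => (hω hmn).trans h)
      (by simpa [S] using ht) hesc n
  rw [measure_eq_sub_measure_succ_le ((measurableSet_le (by fun_prop) measurable_const)
      |>.nullMeasurableSet.congr (hge (k + 1)).symm),
    measure_congr (hge k), measure_congr (hge (k + 1)), hcdf, hcdf,
    ← ENNReal.ofReal_sub _ (pow_nonneg hc _)]
  congr 1
  ring
end

section
/- For a fixed real L with 0 < L < n (and L not an integer), the function p(ℓ) = L * (n-1)!/(n+ℓ-1)! * Γ(n+ℓ-L-1)/Γ(n-L), ℓ = 1, 2, ..., defines a probability measure on the positive integers: the sum over ℓ ≥ 1 of p(ℓ) equals 1. -/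
open Real Filter Finset Topology

/-!
Write `x = n`. The term of index `m` is `S m - S (m + 1)` for the survival function
`S m = P(ℓ > m) = Γ(x) Γ(x + m - L) / (Γ(x + m) Γ(x - L))`, so the series telescopes to
`S 0 - lim S = 1`.
The limit vanishes because `S (m + 1) = S m (1 - L / (x + m))`, whence
`S m ≤ exp (-L ∑_{k < m} 1 / (x + k))`, and the harmonic series diverges.
-/

theorem hasSum_sub_succ_of_tendsto_zero {t : ℕ → ℝ} (hanti : ∀ m, t (m + 1) ≤ t m)
    (ht : Tendsto t atTop (𝓝 0)) : HasSum (fun m => t m - t (m + 1)) (t 0) := by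
  refine (hasSum_iff_tendsto_nat_of_nonneg (fun m => sub_nonneg.2 (hanti m)) _).2 ?_
  simp_rw [sum_range_sub']
  simpa using tendsto_const_nhds.sub ht

theorem le_mul_exp_neg_sum_of_le_mul_one_sub {t a : ℕ → ℝ} (ht : ∀ m, 0 ≤ t m)
    (hrec : ∀ m, t (m + 1) ≤ t m * (1 - a m)) (m : ℕ) :
    t m ≤ t 0 * exp (-∑ k ∈ range m, a k) := by
  induction m with
  | zero => simp
  | succ m ih =>
    calc t (m + 1) ≤ t m * (1 - a m) := hrec m
      _ ≤ t m * exp (-a m) := by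
          gcongr
          · exact ht m
          · linarith [add_one_le_exp (-a m)]
      _ ≤ t 0 * exp (-∑ k ∈ range m, a k) * exp (-a m) := by gcongr
      _ = t 0 * exp (-∑ k ∈ range (m + 1), a k) := by
          rw [mul_assoc, ← exp_add, sum_range_succ, neg_add]

theorem tendsto_zero_of_le_mul_one_sub {t a : ℕ → ℝ} (ht : ∀ m, 0 ≤ t m)
    (hrec : ∀ m, t (m + 1) ≤ t m * (1 - a m)) (ha : ∀ m, 0 ≤ a m) (hdiv : ¬Summable a) :
    Tendsto t atTop (𝓝 0) := by
  have hsum : Tendsto (fun m => ∑ k ∈ range m, a k) atTop atTop :=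
    (not_summable_iff_tendsto_nat_atTop_of_nonneg ha).1 hdiv
  have hexp : Tendsto (fun m => t 0 * exp (-∑ k ∈ range m, a k)) atTop (𝓝 0) := by
    simpa using (tendsto_exp_atBot.comp (tendsto_neg_atTop_atBot.comp hsum)).const_mul (t 0)
  exact squeeze_zero ht (le_mul_exp_neg_sum_of_le_mul_one_sub ht hrec) hexp

theorem not_summable_div_natCast_add {L x : ℝ} (hL : L ≠ 0) (hx : 0 < x) :
    ¬Summable (fun m : ℕ => L / (x + m)) := by
  intro h
  have := (Real.summable_one_div_nat_add_rpow x 1).1 <| (h.mul_left L⁻¹).congr fun m => by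
    rw [rpow_one, abs_of_pos (by positivity), add_comm, inv_mul_eq_div, div_div_cancel_left' hL,
      one_div]
  exact lt_irrefl _ this

noncomputable def waitingSurvival (x L : ℝ) (m : ℕ) : ℝ :=
  Gamma x * Gamma (x + m - L) / (Gamma (x + m) * Gamma (x - L))

section waitingSurvival

variable {x L : ℝ}

theorem waitingSurvival_zero (hL : 0 ≤ L) (hLx : L < x) : waitingSurvival x L 0 = 1 := by
  have hx : Gamma x ≠ 0 := (Gamma_pos_of_pos (by linarith)).ne'
  have hxL : Gamma (x - L) ≠ 0 := (Gamma_pos_of_pos (by linarith)).ne'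
  simp [waitingSurvival, hx, hxL]

theorem waitingSurvival_nonneg (hL : 0 ≤ L) (hLx : L < x) (m : ℕ) :
    0 ≤ waitingSurvival x L m := by
  have := Gamma_pos_of_pos (show 0 < x by linarith)
  have := Gamma_pos_of_pos (show 0 < x + m by linarith [m.cast_nonneg (α := ℝ)])
  have := Gamma_pos_of_pos (show 0 < x + m - L by linarith [m.cast_nonneg (α := ℝ)])
  have := Gamma_pos_of_pos (show 0 < x - L by linarith)
  unfold waitingSurvival
  positivity

theorem waitingSurvival_succ (hL : 0 ≤ L) (hLx : L < x) (m : ℕ) :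
    waitingSurvival x L (m + 1) = waitingSurvival x L m * (1 - L / (x + m)) := by
  have hxm : 0 < x + m := by linarith [m.cast_nonneg (α := ℝ)]
  have hxmL : 0 < x + m - L := by linarith [m.cast_nonneg (α := ℝ)]
  have := Gamma_pos_of_pos hxm
  have := Gamma_pos_of_pos (show 0 < x - L by linarith)
  unfold waitingSurvival
  rw [Nat.cast_succ, ← add_assoc, add_sub_right_comm, Gamma_add_one hxmL.ne',
    Gamma_add_one hxm.ne']
  field_simp

theorem waitingSurvival_sub_succ (hL : 0 ≤ L) (hLx : L < x) (m : ℕ) :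
    waitingSurvival x L m - waitingSurvival x L (m + 1) =
      L * Gamma x / Gamma (x + m + 1) * Gamma (x + m - L) / Gamma (x - L) := by
  have hxm : 0 < x + m := by linarith [m.cast_nonneg (α := ℝ)]
  have := Gamma_pos_of_pos hxm
  have := Gamma_pos_of_pos (show 0 < x - L by linarith)
  rw [waitingSurvival_succ hL hLx, Gamma_add_one hxm.ne', waitingSurvival]
  field_simp
  ring

theorem tendsto_waitingSurvival (hL : 0 < L) (hLx : L < x) :
    Tendsto (waitingSurvival x L) atTop (𝓝 0) :=
  tendsto_zero_of_le_mul_one_sub (waitingSurvival_nonneg hL.le hLx)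
    (fun m => (waitingSurvival_succ hL.le hLx m).le)
    (fun m => div_nonneg hL.le (by linarith [m.cast_nonneg (α := ℝ)]))
    (not_summable_div_natCast_add hL.ne' (hL.trans hLx))

theorem hasSum_waitingTime (hL : 0 < L) (hLx : L < x) :
    HasSum (fun m : ℕ => L * Gamma x / Gamma (x + m + 1) * Gamma (x + m - L) / Gamma (x - L))
      1 := by
  have hanti (m : ℕ) : waitingSurvival x L (m + 1) ≤ waitingSurvival x L m := by
    rw [waitingSurvival_succ hL.le hLx]
    refine mul_le_of_le_one_right (waitingSurvival_nonneg hL.le hLx m) ?_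
    linarith [div_nonneg hL.le (by linarith [m.cast_nonneg (α := ℝ)] : 0 ≤ x + m)]
  simpa only [waitingSurvival_sub_succ hL.le hLx, waitingSurvival_zero hL.le hLx] using
    hasSum_sub_succ_of_tendsto_zero hanti (tendsto_waitingSurvival hL hLx)

end waitingSurvival

theorem mecke_discrete_waiting_time_prob_measure_general (n : ℕ)
    (L : ℝ) (hL0 : 0 < L) (hLn : L < n) :
    ∑' m : ℕ, L * ((n - 1).factorial : ℝ) / ((n + m).factorial : ℝ) *
        Gamma ((n : ℝ) + (m : ℝ) - L) / Gamma ((n : ℝ) - L) = 1 := by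
  have hn0 : n ≠ 0 := by
    rintro rfl
    exact absurd (hL0.trans hLn) (by simp)
  have hpred : (((n - 1 : ℕ) : ℝ) + 1) = n := by rw [Nat.cast_pred (Nat.pos_of_ne_zero hn0)]; ring
  simp_rw [← Gamma_nat_eq_factorial, hpred, Nat.cast_add]
  exact (hasSum_waitingTime hL0 hLn).tsum_eq

/-- For an integer `n ≥ 2` and a real `L` with `0 < L < n` (`L` not an integer),
the function `p(ℓ) = L ⬝ (n-1)!/(n+ℓ-1)! ⬝ Γ(n+ℓ-L-1)/Γ(n-L)`, `ℓ = 1, 2, ...`,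
is a probability distribution on the positive integers: `∑_{ℓ ≥ 1} p(ℓ) = 1`.
(The sum below runs over `m = ℓ - 1 = 0, 1, 2, ...`.) -/
theorem mecke_discrete_waiting_time_prob_measure (n : ℕ) (hn : 2 ≤ n)
    (L : ℝ) (hL0 : 0 < L) (hLn : L < n) (hLint : ∀ m : ℤ, L ≠ m) :
    ∑' m : ℕ, L * ((n - 1).factorial : ℝ) / ((n + m).factorial : ℝ) *
        Gamma ((n : ℝ) + (m : ℝ) - L) / Gamma ((n : ℝ) - L) = 1 :=
  mecke_discrete_waiting_time_prob_measure_general n L hL0 hLn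
end

section
/- For an integer n ≥ 2 and real L with 0 < L < n, the series sum_{ℓ=1}^{∞} Γ(n+ℓ-L-1)/(n+ℓ-1)! equals Γ(n-L)/(L·(n-1)!). -/
/-!
With `s = n - L`, the ratios `a m = Γ(s + m) / Γ(s + L + m)` telescope: by `Γ(x + 1) = x Γ(x)`,
`a m - a (m + 1) = L · Γ(s + m) / Γ(s + L + m + 1)`, so the series sums to `(a 0 - lim a) / L`.
The positive sequence `a` decreases to `0`: otherwise the summands would dominate a positive
multiple of the harmonic series `∑ 1 / (s + L + m)`.
-/

open Real Filter Topology

theorem Antitone.hasSum_sub_succ {a : ℕ → ℝ} {l : ℝ} (ha : Antitone a)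
    (hl : Tendsto a atTop (𝓝 l)) : HasSum (fun m ↦ a m - a (m + 1)) (a 0 - l) := by
  rw [hasSum_iff_tendsto_nat_of_nonneg fun m ↦ sub_nonneg.2 (ha m.le_succ)]
  simp_rw [Finset.sum_range_sub']
  exact tendsto_const_nhds.sub hl

theorem Antitone.tendsto_zero_of_summable_div_add_natCast {a : ℕ → ℝ} {t : ℝ}
    (ha : Antitone a) (ha0 : ∀ m, 0 ≤ a m) (ht : 0 ≤ t)
    (hsum : Summable fun m : ℕ ↦ a m / (t + m)) : Tendsto a atTop (𝓝 0) := by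
  have hbdd : BddBelow (Set.range a) := ⟨0, by rintro _ ⟨m, rfl⟩; exact ha0 m⟩
  convert tendsto_atTop_ciInf ha hbdd
  set c := ⨅ m, a m
  by_contra hc
  have hc_sum : Summable fun m : ℕ ↦ c / (t + m) :=
    hsum.of_nonneg_of_le (fun m ↦ div_nonneg (le_ciInf ha0) (by positivity))
      fun m ↦ div_le_div_of_nonneg_right (ciInf_le hbdd m) (by positivity)
  refine absurd ((summable_one_div_nat_add_rpow t 1).1 ?_) (lt_irrefl 1)
  refine (hc_sum.mul_left c⁻¹).congr fun m ↦ ?_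
  rw [abs_of_nonneg (by positivity), rpow_one, add_comm (m : ℝ), mul_div,
    inv_mul_cancel₀ (Ne.symm hc)]

theorem Gamma_div_Gamma_add_one {x y : ℝ} (hy : y ≠ 0) :
    Gamma x / Gamma (y + 1) = Gamma x / Gamma y / y := by
  rw [Gamma_add_one hy, div_div, mul_comm]

theorem Gamma_div_Gamma_sub_Gamma_add_one_div_Gamma_add_one {x y : ℝ} (hx : x ≠ 0) (hy : 0 < y) :
    Gamma x / Gamma y - Gamma (x + 1) / Gamma (y + 1) = (y - x) * (Gamma x / Gamma (y + 1)) := by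
  have := Gamma_pos_of_pos hy
  rw [Gamma_add_one hx, Gamma_add_one hy.ne']
  field_simp

theorem hasSum_Gamma_add_div_Gamma_add_add_one {s L : ℝ} (hs : 0 < s) (hL : 0 < L) :
    HasSum (fun m : ℕ ↦ Gamma (s + m) / Gamma (s + L + m + 1))
      (Gamma s / (L * Gamma (s + L))) := by
  set a : ℕ → ℝ := fun m ↦ Gamma (s + m) / Gamma (s + L + m)
  have hs_m : ∀ m : ℕ, 0 < s + m := fun m ↦ by positivity
  have hsL_m : ∀ m : ℕ, 0 < s + L + m := fun m ↦ by positivity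
  have ha0 : ∀ m, 0 ≤ a m := fun m ↦
    (div_pos (Gamma_pos_of_pos (hs_m m)) (Gamma_pos_of_pos (hsL_m m))).le
  have hterm : ∀ m : ℕ, Gamma (s + m) / Gamma (s + L + m + 1) = a m / (s + L + m) :=
    fun m ↦ Gamma_div_Gamma_add_one (hsL_m m).ne'
  have hdiff : ∀ m, a m - a (m + 1) = L * (a m / (s + L + m)) := fun m ↦ by
    have := Gamma_div_Gamma_sub_Gamma_add_one_div_Gamma_add_one (hs_m m).ne' (hsL_m m)
    simp only [a, Nat.cast_succ, ← add_assoc, ← hterm]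
    convert this using 2
    ring
  have hanti : Antitone a := antitone_nat_of_succ_le fun m ↦ by
    have := mul_nonneg hL.le (div_nonneg (ha0 m) (hsL_m m).le)
    linarith [hdiff m]
  have hbdd : BddBelow (Set.range a) := ⟨0, by rintro _ ⟨m, rfl⟩; exact ha0 m⟩
  have hsum : Summable fun m : ℕ ↦ a m / (s + L + m) := by
    have := (hanti.hasSum_sub_succ (tendsto_atTop_ciInf hanti hbdd)).summable
    simp_rw [hdiff] at this
    exact (summable_mul_left_iff hL.ne').1 this
  have hlim := hanti.tendsto_zero_of_summable_div_add_natCast ha0 (by positivity) hsum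
  have := (hanti.hasSum_sub_succ hlim).div_const L
  simp_rw [hdiff, mul_div_cancel_left₀ _ hL.ne', ← hterm] at this
  rwa [show (a 0 - 0) / L = Gamma s / (L * Gamma (s + L)) by
    simp [a, div_div, mul_comm]] at this

theorem gamma_factorial_series_general (n : ℕ)
    (L : ℝ) (hL0 : 0 < L) (hLn : L < n) :
    ∑' m : ℕ, Gamma ((n : ℝ) + (m : ℝ) - L) / ((n + m).factorial : ℝ)
      = Gamma ((n : ℝ) - L) / (L * ((n - 1).factorial : ℝ)) := by
  obtain ⟨k, rfl⟩ : ∃ k, n = k + 1 := Nat.exists_eq_add_one.2 (by exact_mod_cast hL0.trans hLn)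
  have h := hasSum_Gamma_add_div_Gamma_add_add_one (sub_pos.2 hLn) hL0
  simp only [sub_add_cancel, Nat.cast_add_one, Gamma_nat_eq_factorial] at h
  convert h.tsum_eq using 1
  · congr 1 with m
    rw [← Nat.cast_add_one, ← Gamma_nat_eq_factorial]
    push_cast
    ring_nf
  · simp

/-- For an integer `n ≥ 2` and real `L` with `0 < L < n`:
`∑_{ℓ=1}^{∞} Γ(n+ℓ-L-1)/(n+ℓ-1)! = Γ(n-L)/(L ⬝ (n-1)!)`.
(The sum below runs over `m = ℓ - 1 = 0, 1, 2, ...`.) -/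
theorem gamma_factorial_series (n : ℕ) (hn : 2 ≤ n)
    (L : ℝ) (hL0 : 0 < L) (hLn : L < n) :
    ∑' m : ℕ, Gamma ((n : ℝ) + (m : ℝ) - L) / ((n + m).factorial : ℝ)
      = Gamma ((n : ℝ) - L) / (L * ((n - 1).factorial : ℝ)) :=
  gamma_factorial_series_general n L hL0 hLn
end

section
/- For an integer ℓ ≥ 2, an integer k with 0 ≤ k ≤ ℓ-1, and a real L with 0 < L < 2 and L ≠ k, the identity sum_{n=k}^{ℓ-1} binom(n, k) Γ(n-L)/(Γ(2-L) n!) = binom(ℓ, k) (ℓ-k) Γ(ℓ-L) / (ℓ! (k-L) Γ(2-L)) holds (interpreting Γ(n-L) via analytic continuation for n-L < 0 when needed, i.e. for n=0,1 with L>n). -/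
/-!
Writing `a = k - L` and `n = k + j`, the identity `C(n, k) / n! = 1 / (k! j!)` reduces the claim to
the Gamma-function form of the hockey-stick identity `a ∑_{j<m} Γ(a + j) / j! = m Γ(a + m) / m!`.
This telescopes: adding the next term turns `m Γ(a + m)` into `(a + m) Γ(a + m) = Γ(a + m + 1)`.
The conditions on `L` keep every `a + j` off the poles, where `Γ(s + 1) = s Γ(s)` could fail.
-/

open Real

theorem Real.mul_sum_range_Gamma_add_div_factorial (a : ℝ) (m : ℕ)
    (ha : ∀ j < m, a + j ≠ 0) :
    a * ∑ j ∈ Finset.range m, Gamma (a + j) / j.factorial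
      = m * Gamma (a + m) / m.factorial := by
  induction m with
  | zero => simp
  | succ m ih =>
    have hm : a + m ≠ 0 := ha m m.lt_succ_self
    rw [Finset.sum_range_succ, mul_add, ih fun j hj => ha j (hj.trans m.lt_succ_self),
      Nat.factorial_succ]
    push_cast
    rw [← add_assoc, Gamma_add_one hm]
    field_simp
    ring

theorem binom_gamma_sum_identity_general (ℓ k : ℕ) (hk : k ≤ ℓ - 1)
    (L : ℝ) (hL2 : L < 2) (hLk : L ≠ (k : ℝ)) (hL1 : L ≠ 1) :
    ∑ n ∈ Finset.Ico k ℓ,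
        (n.choose k : ℝ) * Gamma ((n : ℝ) - L) / (Gamma (2 - L) * (n.factorial : ℝ))
      = (ℓ.choose k : ℝ) * ((ℓ : ℝ) - (k : ℝ)) * Gamma ((ℓ : ℝ) - L) /
          ((ℓ.factorial : ℝ) * ((k : ℝ) - L) * Gamma (2 - L)) := by
  have hkℓ : k ≤ ℓ := by omega
  have hΓ : Gamma (2 - L) ≠ 0 := (Gamma_pos_of_pos (by linarith)).ne'
  have hpoles : ∀ j < ℓ - k, (k - L : ℝ) + j ≠ 0 := by
    intro j _ h
    have hL : L = ((k + j : ℕ) : ℝ) := by push_cast; linarith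
    obtain rfl | hj := Nat.eq_zero_or_pos j
    · exact hLk (by simpa using hL)
    obtain h1 | h2 : k + j = 1 ∨ 2 ≤ k + j := by omega
    · exact hL1 (by rw [hL, h1, Nat.cast_one])
    · have : (2 : ℝ) ≤ ((k + j : ℕ) : ℝ) := by exact_mod_cast h2
      linarith
  have hsum := mul_sum_range_Gamma_add_div_factorial (k - L) (ℓ - k) hpoles
  calc ∑ n ∈ Finset.Ico k ℓ,
        (n.choose k : ℝ) * Gamma ((n : ℝ) - L) / (Gamma (2 - L) * (n.factorial : ℝ))
      = (Gamma (2 - L) * k.factorial)⁻¹ *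
          ∑ j ∈ Finset.range (ℓ - k), Gamma ((k - L : ℝ) + j) / j.factorial := by
        rw [Finset.sum_Ico_eq_sum_range, Finset.mul_sum]
        refine Finset.sum_congr rfl fun j _ => ?_
        rw [Nat.cast_add_choose]
        push_cast
        field_simp
        ring_nf
    _ = _ := by
        rw [Nat.cast_sub hkℓ, show (k - L : ℝ) + (ℓ - k) = ℓ - L by ring] at hsum
        rw [Nat.cast_choose ℝ hkℓ]
        field_simp at hsum ⊢
        linear_combination hsum

/-- For an integer `ℓ ≥ 2`, an integer `k` with `0 ≤ k ≤ ℓ-1`, and a real `L`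
with `0 < L < 2`, `L ≠ k` and `L ≠ 1` (so that no pole of `Γ` is hit; Mathlib's
`Real.Gamma` is the analytic continuation away from the poles):
`∑_{n=k}^{ℓ-1} C(n,k) Γ(n-L)/(Γ(2-L) n!)
  = C(ℓ,k) (ℓ-k) Γ(ℓ-L)/(ℓ! (k-L) Γ(2-L))`. -/
theorem binom_gamma_sum_identity (ℓ k : ℕ) (hℓ : 2 ≤ ℓ) (hk : k ≤ ℓ - 1)
    (L : ℝ) (hL0 : 0 < L) (hL2 : L < 2) (hLk : L ≠ (k : ℝ)) (hL1 : L ≠ 1) :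
    ∑ n ∈ Finset.Ico k ℓ,
        (n.choose k : ℝ) * Gamma ((n : ℝ) - L) / (Gamma (2 - L) * (n.factorial : ℝ))
      = (ℓ.choose k : ℝ) * ((ℓ : ℝ) - (k : ℝ)) * Gamma ((ℓ : ℝ) - L) /
          ((ℓ.factorial : ℝ) * ((k : ℝ) - L) * Gamma (2 - L)) :=
  binom_gamma_sum_identity_general ℓ k hk L hL2 hLk hL1
end

section
/- For an integer ℓ ≥ 2 and pairwise distinct reals L_2,...,L_ℓ in (0, ℓ) (none equal to an integer ≤ ℓ), the function P(n) = (-1)^ℓ (1/n!) (prod_{i=2}^ℓ L_i) sum_{i=2}^{ℓ} [ Γ(n-L_i)/Γ(2-L_i) prod_{j in {2,...,ℓ}\{i}} 1/(L_i - L_j) ], defined for integers n ≥ ℓ, sums to 1: sum_{n=ℓ}^∞ P(n) = 1. -/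
/-!
Swap the two sums. For each node `L = L_i` the series over `n` telescopes: since
`Γ(n - L) / (n - 1)! - Γ(n + 1 - L) / n! = L Γ(n - L) / n!` and `Γ(n - L) / (n - 1)! → 0`
by Euler's limit formula, `∑_{n ≥ ℓ} Γ(n - L) / n! = Γ(ℓ - L) / (L (ℓ - 1)!)`. Moreover
`Γ(ℓ - L) / Γ(2 - L) = q(L)` for `q(X) = (2 - X)(3 - X) ⋯ (ℓ - 1 - X)`, of degree `ℓ - 2`.
What is left, `(-1)^ℓ (∏ L_j) ∑_i q(L_i) / L_i ∏_{j ≠ i} (L_i - L_j)⁻¹`, is the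
barycentric Lagrange formula for `q(0) = (ℓ - 1)!` at the `ℓ - 1` nodes `L_i`, divided
by `(ℓ - 1)!`.
-/

open Real Filter Finset Polynomial Topology Lagrange
open scoped Nat

theorem Real.Gamma_add_nat_eq_prod_mul_Gamma (x : ℝ) (n : ℕ) (hx : ∀ k < n, x + k ≠ 0) :
    Gamma (x + n) = (∏ k ∈ range n, (x + k)) * Gamma x := by
  induction n with
  | zero => simp
  | succ n ih =>
    rw [Nat.cast_succ, ← add_assoc, Gamma_add_one (hx n n.lt_succ_self),
      ih fun k hk => hx k (hk.trans n.lt_succ_self), prod_range_succ]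
    ring

/-- By Euler's limit formula, `Γ(s + n + 1) / n! = Γ(s) n^s / GammaSeq s n` tends to
`Γ(s) · 0 / Γ(s)`. -/
theorem Real.tendsto_Gamma_add_nat_add_one_div_factorial {s : ℝ} (hs : s < 0)
    (hs' : ∀ m : ℕ, s ≠ -m) :
    Tendsto (fun n : ℕ => Gamma (s + n + 1) / n !) atTop (𝓝 0) := by
  have hpow : Tendsto (fun n : ℕ => (n : ℝ) ^ s) atTop (𝓝 0) := by
    have := (tendsto_rpow_neg_atTop (neg_pos.2 hs)).comp tendsto_natCast_atTop_atTop
    simpa only [neg_neg, Function.comp_def] using this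
  have hlim := (hpow.const_mul (Gamma s)).div (GammaSeq_tendsto_Gamma s) (Gamma_ne_zero hs')
  rw [mul_zero, zero_div] at hlim
  refine hlim.congr' ((eventually_ge_atTop 1).mono fun n hn => ?_)
  have hprod : Gamma (s + n + 1) = (∏ j ∈ range (n + 1), (s + j)) * Gamma s := by
    rw [add_assoc, ← Nat.cast_add_one]
    exact Gamma_add_nat_eq_prod_mul_Gamma s (n + 1) fun k _ h => hs' k (by linarith)
  have hn' : (0 : ℝ) < n := by exact_mod_cast hn
  rw [Pi.div_apply, GammaSeq]
  beta_reduce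
  rw [hprod]
  field_simp [(rpow_pos_of_pos hn' s).ne']

theorem hasSum_sub_succ_of_tendsto_zero_s17 {u : ℕ → ℝ} (hu : ∀ n, u (n + 1) ≤ u n)
    (h : Tendsto u atTop (𝓝 0)) : HasSum (fun n => u n - u (n + 1)) (u 0) := by
  rw [hasSum_iff_tendsto_nat_of_nonneg (fun n => sub_nonneg.2 (hu n))]
  simp_rw [sum_range_sub']
  simpa using tendsto_const_nhds.sub h

theorem Real.hasSum_Gamma_add_sub_div_factorial {N : ℕ} {L : ℝ} (hL : 0 < L) (hLN : L < N)
    (hLnat : ∀ m : ℕ, L ≠ m) :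
    HasSum (fun m : ℕ => Gamma ((m : ℝ) + N - L) / (m + N)!)
      (Gamma (N - L) / (L * (N - 1)!)) := by
  obtain ⟨n, rfl⟩ : ∃ n, N = n + 1 :=
    Nat.exists_eq_add_one.2 (Nat.cast_pos.1 (hL.trans hLN))
  push_cast at hLN ⊢
  set u : ℕ → ℝ := fun m => Gamma (m + n + 1 - L) / (m + n)! with hu
  have hpos : ∀ m : ℕ, 0 < (m : ℝ) + n + 1 - L := fun m => by
    have : (0 : ℝ) ≤ m := m.cast_nonneg
    linarith
  have hstep : ∀ m : ℕ,
      u m - u (m + 1) = L * (Gamma ((m : ℝ) + (n + 1) - L) / (m + (n + 1))!) := by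
    intro m
    simp only [hu, Nat.cast_succ, show m + 1 + n = m + n + 1 by omega,
      show m + (n + 1) = m + n + 1 by omega, Nat.factorial_succ, Nat.cast_mul]
    rw [show (m : ℝ) + 1 + n + 1 - L = (m + n + 1 - L) + 1 by ring, Gamma_add_one (hpos m).ne',
      show (m : ℝ) + (n + 1) - L = m + n + 1 - L by ring]
    field_simp
    push_cast
    ring
  have hdecay : Tendsto u atTop (𝓝 0) := by
    have := (tendsto_Gamma_add_nat_add_one_div_factorial (s := -L) (by linarith)
      fun m h => hLnat m (by linarith)).comp (tendsto_add_atTop_nat n)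
    refine this.congr fun m => ?_
    simp only [Function.comp, hu, Nat.cast_add]
    ring_nf
  have hmono : ∀ m, u (m + 1) ≤ u m := fun m => by
    rw [← sub_nonneg, hstep]
    exact mul_nonneg hL.le (div_nonneg (Gamma_pos_of_pos (by linarith [hpos m])).le
      (by positivity))
  have := (hasSum_sub_succ_of_tendsto_zero_s17 hmono hdecay).div_const L
  simp only [hstep, mul_div_cancel_left₀ _ hL.ne'] at this
  have hu0 : u 0 / L = Gamma (n + 1 - L) / (L * n !) := by
    simp only [hu, Nat.cast_zero, zero_add]
    ring
  rwa [hu0] at this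

theorem Lagrange.eval_eq_eval_nodal_mul_sum_nodalWeight {F ι : Type*} [Field F] [DecidableEq ι]
    {s : Finset ι} {v : ι → F} (hvs : Set.InjOn v s) {p : F[X]} (hp : p.degree < #s) {x : F}
    (hx : ∀ i ∈ s, x ≠ v i) :
    p.eval x =
      (nodal s v).eval x * ∑ i ∈ s, nodalWeight s v i * (x - v i)⁻¹ * p.eval (v i) := by
  conv_lhs => rw [eq_interpolate hvs hp]
  exact eval_interpolate_not_at_node _ hx

theorem Lagrange.eval_zero_eq_neg_one_pow_mul_prod_mul_sum_nodalWeight {F ι : Type*} [Field F]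
    [DecidableEq ι] {s : Finset ι} {v : ι → F} (hvs : Set.InjOn v s) {p : F[X]}
    (hp : p.degree < #s) (hv : ∀ i ∈ s, v i ≠ 0) :
    p.eval 0 = (-1) ^ (#s + 1) * (∏ i ∈ s, v i) *
      ∑ i ∈ s, nodalWeight s v i * p.eval (v i) / v i := by
  rw [eval_eq_eval_nodal_mul_sum_nodalWeight hvs hp fun i hi => (hv i hi).symm, eval_nodal]
  simp_rw [zero_sub, prod_neg, inv_neg, mul_sum, div_eq_mul_inv]
  refine sum_congr rfl fun i _ => ?_
  ring

noncomputable def gammaRatioPoly (n : ℕ) : ℝ[X] := ∏ k ∈ range n, (C ((k : ℝ) + 2) - X)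

theorem degree_gammaRatioPoly_lt (n : ℕ) : (gammaRatioPoly n).degree < ↑(n + 1) := by
  have : (gammaRatioPoly n).natDegree ≤ n := (natDegree_prod_le _ _).trans <|
    (sum_le_card_nsmul _ _ 1 fun k _ => by compute_degree!).trans (by simp)
  exact degree_le_natDegree.trans_lt (by exact_mod_cast Nat.lt_succ_of_le this)

theorem eval_zero_gammaRatioPoly (n : ℕ) : (gammaRatioPoly n).eval 0 = (n + 1)! := by
  simp only [gammaRatioPoly, eval_prod, eval_sub, eval_C, eval_X, sub_zero]
  rw [← prod_range_add_one_eq_factorial, prod_range_succ']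
  push_cast
  rw [mul_one]
  exact prod_congr rfl fun k _ => by ring

theorem Real.Gamma_nat_add_two_sub {x : ℝ} (n : ℕ) (hx : ∀ k < n, x ≠ k + 2) :
    Gamma (n + 2 - x) = (gammaRatioPoly n).eval x * Gamma (2 - x) := by
  have := Gamma_add_nat_eq_prod_mul_Gamma (2 - x) n fun k hk h => hx k hk (by linarith)
  simp only [gammaRatioPoly, eval_prod, eval_sub, eval_C, eval_X]
  convert this using 2
  · ring
  · exact prod_congr rfl fun k _ => by ring

theorem Real.hasSum_Gamma_add_sub_div_Gamma_two_sub_div_factorial (n : ℕ) {x : ℝ} (hx : 0 < x)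
    (hxn : x < n + 2) (hxnat : ∀ k : ℕ, x ≠ k) :
    HasSum (fun m : ℕ => Gamma (m + (n + 2 : ℕ) - x) / Gamma (2 - x) / (m + (n + 2))!)
      ((gammaRatioPoly n).eval x / (x * (n + 1)!)) := by
  have := (hasSum_Gamma_add_sub_div_factorial (N := n + 2) hx (by exact_mod_cast hxn)
    hxnat).div_const (Gamma (2 - x))
  have hG2 : Gamma (2 - x) ≠ 0 :=
    Gamma_ne_zero fun k hk => hxnat (k + 2) (by push_cast; linarith)
  rw [show n + 2 - 1 = n + 1 from rfl, Nat.cast_add, Nat.cast_two,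
    Gamma_nat_add_two_sub n fun k _ => by exact_mod_cast hxnat (k + 2)] at this
  rw [show (gammaRatioPoly n).eval x / (x * (n + 1)!) =
      (gammaRatioPoly n).eval x * Gamma (2 - x) / (x * (n + 1)!) / Gamma (2 - x) by
    field_simp]
  exact this.congr_fun fun m => by push_cast; ring

theorem ne_natCast_of_lt_of_forall_le_ne_intCast {x y : ℝ} (hxy : x < y)
    (h : ∀ m : ℤ, (m : ℝ) ≤ y → x ≠ m) (k : ℕ) : x ≠ k := by
  rcases le_or_gt (k : ℝ) y with hk | hk
  · exact_mod_cast h k (by exact_mod_cast hk)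
  · exact (hxy.trans hk).ne

/-- For an integer `ℓ ≥ 2` and pairwise distinct reals `L_2, ..., L_ℓ` in
`(0, ℓ)`, none of them equal to an integer `≤ ℓ`, the Mecke discrete jump-time
probabilities
`P(n) = (-1)^ℓ (1/n!) (∏_{i=2}^ℓ L_i) ∑_{i=2}^ℓ Γ(n-L_i)/Γ(2-L_i) ∏_{j≠i} 1/(L_i-L_j)`
(for integers `n ≥ ℓ`) sum to `1`.  (The sum below runs over `m = n - ℓ ≥ 0`.) -/
theorem mecke_jump_time_prob_measure (ℓ : ℕ) (hℓ : 2 ≤ ℓ) (L : ℕ → ℝ)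
    (hinj : Set.InjOn L (Finset.Icc 2 ℓ : Finset ℕ))
    (hrange : ∀ i ∈ Finset.Icc 2 ℓ, 0 < L i ∧ L i < ℓ)
    (hint : ∀ i ∈ Finset.Icc 2 ℓ, ∀ m : ℤ, (m : ℝ) ≤ ℓ → L i ≠ m) :
    ∑' m : ℕ,
        (-1 : ℝ) ^ ℓ * (1 / ((m + ℓ).factorial : ℝ)) *
          (∏ i ∈ Finset.Icc 2 ℓ, L i) *
          ∑ i ∈ Finset.Icc 2 ℓ,
            Gamma (((m : ℝ) + ℓ) - L i) / Gamma (2 - L i) *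
              ∏ j ∈ (Finset.Icc 2 ℓ).erase i, 1 / (L i - L j) = 1 := by
  obtain ⟨n, rfl⟩ : ∃ n, ℓ = n + 2 := ⟨ℓ - 2, by omega⟩
  set t := Icc 2 (n + 2)
  have hcard : #t = n + 1 := by simp [t]
  have hseries : ∀ i ∈ t, HasSum
      (fun m : ℕ => Gamma (m + (n + 2 : ℕ) - L i) / Gamma (2 - L i) / (m + (n + 2))!)
      ((gammaRatioPoly n).eval (L i) / (L i * (n + 1)!)) := fun i hi =>
    Real.hasSum_Gamma_add_sub_div_Gamma_two_sub_div_factorial n (hrange i hi).1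
      (by exact_mod_cast (hrange i hi).2)
      (ne_natCast_of_lt_of_forall_le_ne_intCast (hrange i hi).2 (hint i hi))
  have hpoly := eval_zero_eq_neg_one_pow_mul_prod_mul_sum_nodalWeight hinj
    (hcard ▸ degree_gammaRatioPoly_lt n) fun i hi => (hrange i hi).1.ne'
  rw [eval_zero_gammaRatioPoly, hcard] at hpoly
  have hsum := hasSum_sum fun i hi =>
    (hseries i hi).mul_left ((-1) ^ (n + 2) * (∏ i ∈ t, L i) * nodalWeight t L i)
  refine (hsum.congr_fun fun m => ?_).tsum_eq.trans ?_
  · simp only [nodalWeight, one_div, mul_sum]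
    exact sum_congr rfl fun i _ => by ring
  · refine Eq.trans ?_ (div_self (by positivity : ((n + 1)! : ℝ) ≠ 0))
    conv_rhs => arg 1; rw [hpoly]
    rw [mul_sum, sum_div]
    exact sum_congr rfl fun i _ => by field_simp
end

section
/- For an integer ℓ ≥ 2, pairwise distinct reals L_2,...,L_ℓ in (0,2)∪(0,ℓ) with no L_i an integer, and t ≥ 0, the identity sum_{n=ℓ}^{∞} (1-e^{-t})^n (-1)^ℓ (1/n!) (prod_{i=2}^ℓ L_i) sum_{i=2}^{ℓ} [ Γ(n-L_i)/Γ(2-L_i) prod_{j≠i} 1/(L_i-L_j) ] = 1 + (-1)^ℓ sum_{i=1}^{ℓ} e^{-L_i t} prod_{j in {1,...,ℓ}\{i}} L_j/(L_i - L_j), where L_1 = 1 and L_1 is distinct from L_2,...,L_ℓ. -/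
/-!
Put `x = 1 - e^{-t}`, so that `e^{-L t} = (1 - x)^L`. Since `Γ(n - L) / Γ(2 - L)` is
`(-1)^n n! binom(L, n) / (L (L - 1))`, the `n`-th term of the series is
`(-1)^ℓ ∑_{i ≤ ℓ} w_i binom(L_i, n) (-x)^n` with the hypoexponential weights
`w_i = ∏_{j ≠ i} L_j / (L_i - L_j)`; the `i = 1` term vanishes because `L_1 = 1` and `n ≥ 2`.
Summing over `n ≥ ℓ` leaves the tails of the binomial series of `(1 - x)^{L_i}`. The missing
heads `∑_{n < ℓ} binom(L_i, n) (-x)^n` are polynomials of degree `< ℓ` in `L_i`, and Lagrange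
interpolation at the `ℓ` nodes `L_i`, evaluated at `0`, gives `∑_i w_i p(L_i) = (-1)^(ℓ-1) p(0)`.
-/

open Real Polynomial Finset

namespace Lagrange

variable {F ι : Type*} [Field F] [DecidableEq ι] {s : Finset ι} {v : ι → F}

theorem eval_zero_basis (i : ι) :
    (Lagrange.basis s v i).eval 0 = (-1) ^ #(s.erase i) * ∏ j ∈ s.erase i, v j / (v i - v j) := by
  rw [Lagrange.basis, eval_prod, ← prod_neg]
  refine prod_congr rfl fun j _ ↦ ?_
  simp only [Lagrange.basisDivisor, eval_mul, eval_C, eval_sub, eval_X]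
  ring

theorem sum_prod_div_sub_mul_eval (hvs : Set.InjOn v s) {p : F[X]} (hp : p.degree < #s) :
    ∑ i ∈ s, (∏ j ∈ s.erase i, v j / (v i - v j)) * p.eval (v i) = (-1) ^ (#s - 1) * p.eval 0 := by
  have hsign : ∀ i ∈ s, ((-1 : F) ^ (#s - 1)) * (-1) ^ #(s.erase i) = 1 := fun i hi ↦ by
    rw [card_erase_of_mem hi, ← pow_add, Even.neg_one_pow ⟨_, rfl⟩]
  conv_rhs => rw [eq_interpolate hvs hp, interpolate_apply, eval_finsetSum, mul_sum]
  refine sum_congr rfl fun i hi ↦ ?_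
  rw [eval_mul, eval_C, eval_zero_basis]
  linear_combination (-(∏ j ∈ s.erase i, v j / (v i - v j)) * p.eval (v i)) * hsign i hi

end Lagrange

theorem Ring.choose_eq_eval_descPochhammer_div (a : ℝ) (n : ℕ) :
    Ring.choose a n = (descPochhammer ℝ n).eval a / n.factorial := by
  rw [Ring.choose_eq_smul, smul_eq_mul, ← aeval_eq_smeval, aeval_def, eval₂_eq_eval_map,
    descPochhammer_map]
  ring

theorem sum_prod_div_sub_mul_choose {ι : Type*} [DecidableEq ι] {s : Finset ι} {v : ι → ℝ}
    (hvs : Set.InjOn v s) {n : ℕ} (hn : n < #s) :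
    ∑ i ∈ s, (∏ j ∈ s.erase i, v j / (v i - v j)) * Ring.choose (v i) n =
      (-1) ^ (#s - 1) * Ring.choose 0 n := by
  have hdeg : (descPochhammer ℝ n).degree < #s := by
    refine degree_le_natDegree.trans_lt ?_
    rw [descPochhammer_natDegree]
    exact_mod_cast hn
  simp only [Ring.choose_eq_eval_descPochhammer_div, mul_div_assoc', ← sum_div,
    Lagrange.sum_prod_div_sub_mul_eval hvs hdeg]

theorem Real.hasSum_choose_mul_pow {y : ℝ} (hy : |y| < 1) (a : ℝ) :
    HasSum (fun n ↦ Ring.choose a n * y ^ n) ((1 + y) ^ a) := by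
  have hy' : y ∈ Metric.eball (0 : ℝ) 1 := by
    rw [Metric.mem_eball, edist_zero_right, ← ofReal_norm, ENNReal.ofReal_lt_one, Real.norm_eq_abs]
    exact hy
  simpa [binomialSeries, FormalMultilinearSeries.ofScalars_apply_eq, mul_comm]
    using (Real.one_add_rpow_hasFPowerSeriesOnBall_zero (a := a)).hasSum hy'

theorem hasSum_sum_prod_div_sub_mul_choose_tail {ι : Type*} [DecidableEq ι] {s : Finset ι}
    {v : ι → ℝ} (hvs : Set.InjOn v s) (hs : s.Nonempty) {y : ℝ} (hy : |y| < 1) :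
    HasSum (fun m ↦ ∑ i ∈ s, (∏ j ∈ s.erase i, v j / (v i - v j)) *
        (Ring.choose (v i) (m + #s) * y ^ (m + #s)))
      (∑ i ∈ s, (∏ j ∈ s.erase i, v j / (v i - v j)) * (1 + y) ^ v i + (-1) ^ #s) := by
  have htail := fun i (_ : i ∈ s) ↦
    ((hasSum_nat_add_iff' (f := fun n ↦ Ring.choose (v i) n * y ^ n) #s).2
      (hasSum_choose_mul_pow hy (v i))).mul_left (∏ j ∈ s.erase i, v j / (v i - v j))
  have hhead : ∑ i ∈ s, (∏ j ∈ s.erase i, v j / (v i - v j)) *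
      ∑ n ∈ range #s, Ring.choose (v i) n * y ^ n = (-1) ^ (#s - 1) := by
    simp only [mul_sum, ← mul_assoc]
    rw [sum_comm, sum_congr rfl fun n hn ↦ by
      rw [← sum_mul, sum_prod_div_sub_mul_choose hvs (mem_range.1 hn)]]
    simp [Ring.choose_zero_ite, hs.card_pos]
  have hsign : (-1 : ℝ) ^ #s = -(-1) ^ (#s - 1) := by
    rw [← Nat.sub_add_cancel hs.card_pos, pow_succ, Nat.add_sub_cancel, mul_neg_one]
  have h := hasSum_sum htail
  simp only [mul_sub, sum_sub_distrib, hhead] at h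
  rwa [hsign, ← sub_eq_add_neg]

theorem Real.Gamma_add_nat_eq_eval_ascPochhammer_mul {z : ℝ} (hz : ∀ k : ℕ, z ≠ -k) (n : ℕ) :
    Gamma (z + n) = (ascPochhammer ℝ n).eval z * Gamma z := by
  induction n with
  | zero => simp
  | succ n ih =>
    have hzn : z + n ≠ 0 := fun h ↦ hz n (eq_neg_of_add_eq_zero_left h)
    rw [Nat.cast_succ, ← add_assoc, Gamma_add_one hzn, ih, ascPochhammer_succ_eval]
    ring

theorem Real.Gamma_natCast_sub_div_Gamma_two_sub {a : ℝ} (ha : ∀ k : ℕ, a ≠ k) (n : ℕ) :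
    Gamma (n - a) / Gamma (2 - a) = (-1) ^ n * n.factorial * Ring.choose a n / (a * (a - 1)) := by
  have hz : ∀ k : ℕ, -a ≠ -k := fun k h ↦ ha k (neg_inj.1 h)
  have ha0 : a ≠ 0 := by exact_mod_cast ha 0
  have ha1 : a - 1 ≠ 0 := sub_ne_zero.2 (by exact_mod_cast ha 1)
  have hΓ : Gamma (-a) ≠ 0 := Gamma_ne_zero hz
  rw [show (n : ℝ) - a = -a + n by ring, show (2 : ℝ) - a = -a + (2 : ℕ) by push_cast; ring,
    Gamma_add_nat_eq_eval_ascPochhammer_mul hz, Gamma_add_nat_eq_eval_ascPochhammer_mul hz,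
    ascPochhammer_eval_neg_eq_descPochhammer, ascPochhammer_eval_neg_eq_descPochhammer,
    Ring.choose_eq_eval_descPochhammer_div]
  simp only [even_two, Even.neg_pow, one_pow, descPochhammer_succ_eval, descPochhammer_one, eval_X,
    Nat.cast_one, one_mul]
  field_simp

theorem prod_erase_Icc_one_div_sub {ℓ : ℕ} {L : ℕ → ℝ} (hL1 : L 1 = 1) {i : ℕ}
    (hi : i ∈ Icc 2 ℓ) (hLi : L i ≠ 0) :
    ∏ j ∈ (Icc 1 ℓ).erase i, L j / (L i - L j) =
      (∏ j ∈ Icc 2 ℓ, L j) / (L i * (L i - 1)) * ∏ j ∈ (Icc 2 ℓ).erase i, 1 / (L i - L j) := by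
  have herase : (Icc 1 ℓ).erase i = insert 1 ((Icc 2 ℓ).erase i) := by
    ext j
    simp only [mem_erase, mem_Icc, mem_insert] at hi ⊢
    omega
  rw [herase, prod_insert (by simp), hL1, ← mul_prod_erase _ _ hi]
  simp only [div_eq_mul_one_div (L _), prod_mul_distrib]
  field_simp

theorem prod_mul_sum_Gamma_div_eq_sum_prod_div_sub_mul_choose {ℓ n : ℕ} (hℓ : 1 ≤ ℓ) (hn : 2 ≤ n)
    {L : ℕ → ℝ} (hL1 : L 1 = 1) (hL : ∀ i ∈ Icc 2 ℓ, ∀ k : ℕ, L i ≠ k) :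
    (∏ i ∈ Icc 2 ℓ, L i) * ∑ i ∈ Icc 2 ℓ, Gamma (n - L i) / Gamma (2 - L i) *
        ∏ j ∈ (Icc 2 ℓ).erase i, 1 / (L i - L j) =
      (-1) ^ n * n.factorial *
        ∑ i ∈ Icc 1 ℓ, (∏ j ∈ (Icc 1 ℓ).erase i, L j / (L i - L j)) * Ring.choose (L i) n := by
  have hIcc : Icc 1 ℓ = insert 1 (Icc 2 ℓ) := by ext; simp only [mem_Icc, mem_insert]; omega
  have hchoose_one : Ring.choose (L 1) n = 0 := by
    rw [hL1, ← Nat.cast_one, Ring.choose_natCast, Nat.choose_eq_zero_of_lt (by omega),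
      Nat.cast_zero]
  nth_rw 1 [hIcc]
  rw [sum_insert (by simp), hchoose_one, mul_zero, zero_add, mul_sum, mul_sum]
  refine sum_congr rfl fun i hi ↦ ?_
  rw [Real.Gamma_natCast_sub_div_Gamma_two_sub (hL i hi),
    prod_erase_Icc_one_div_sub hL1 hi (by exact_mod_cast hL i hi 0)]
  ring

theorem mecke_stit_jump_equivalence_general (ℓ : ℕ) (hℓ : 2 ≤ ℓ) (L : ℕ → ℝ)
    (hL1 : L 1 = 1)
    (hinj : Set.InjOn L (Finset.Icc 1 ℓ : Finset ℕ))
    (hint : ∀ i ∈ Finset.Icc 2 ℓ, ∀ m : ℤ, L i ≠ m)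
    (t : ℝ) (ht : 0 ≤ t) :
    ∑' m : ℕ,
        (1 - exp (-t)) ^ (m + ℓ) * (-1 : ℝ) ^ ℓ * (1 / ((m + ℓ).factorial : ℝ)) *
          (∏ i ∈ Finset.Icc 2 ℓ, L i) *
          ∑ i ∈ Finset.Icc 2 ℓ,
            Gamma (((m : ℝ) + ℓ) - L i) / Gamma (2 - L i) *
              ∏ j ∈ (Finset.Icc 2 ℓ).erase i, 1 / (L i - L j)
      = 1 + (-1 : ℝ) ^ ℓ *
          ∑ i ∈ Finset.Icc 1 ℓ, exp (-(L i) * t) *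
            ∏ j ∈ (Finset.Icc 1 ℓ).erase i, L j / (L i - L j) := by
  set x := 1 - exp (-t)
  have hx : |-x| < 1 := by
    rw [abs_neg, abs_lt]
    constructor <;> linarith [exp_pos (-t), exp_le_one_iff.2 (neg_nonpos.2 ht)]
  have key := hasSum_sum_prod_div_sub_mul_choose_tail hinj (nonempty_Icc.2 (by omega)) hx
  rw [Nat.card_Icc, Nat.add_sub_cancel] at key
  have hterm : ∀ m : ℕ, x ^ (m + ℓ) * (-1 : ℝ) ^ ℓ * (1 / ((m + ℓ).factorial : ℝ)) *
      (∏ i ∈ Icc 2 ℓ, L i) * ∑ i ∈ Icc 2 ℓ, Gamma (((m : ℝ) + ℓ) - L i) / Gamma (2 - L i) *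
        ∏ j ∈ (Icc 2 ℓ).erase i, 1 / (L i - L j) =
      (-1) ^ ℓ * ∑ i ∈ Icc 1 ℓ, (∏ j ∈ (Icc 1 ℓ).erase i, L j / (L i - L j)) *
        (Ring.choose (L i) (m + ℓ) * (-x) ^ (m + ℓ)) := fun m ↦ by
    rw [mul_assoc _ (∏ i ∈ Icc 2 ℓ, L i), ← Nat.cast_add,
      prod_mul_sum_Gamma_div_eq_sum_prod_div_sub_mul_choose (by omega) (by omega) hL1
        fun i hi k ↦ by exact_mod_cast hint i hi k]
    simp only [neg_pow x, ← mul_assoc, ← sum_mul]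
    field_simp
  have hexp : ∀ i, (1 + -x) ^ L i = exp (-(L i) * t) := fun i ↦ by
    rw [← sub_eq_add_neg, sub_sub_cancel, ← exp_mul]
    ring_nf
  rw [tsum_congr hterm, (key.mul_left _).tsum_eq]
  simp only [hexp, mul_comm _ (rexp _)]
  rw [mul_add, ← pow_add, Even.neg_one_pow ⟨ℓ, rfl⟩, add_comm]

/-- Equivalence of the geometric-time-changed Mecke jump probabilities and the
hypoexponential (STIT) CDF, with `Λ([W]) = 1`.  Here `L 1 = 1` and
`L_2, ..., L_ℓ` are pairwise distinct reals in `(0, ℓ)`, none an integer, all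
distinct from `1`; `t ≥ 0`.  Then
`∑_{n=ℓ}^∞ (1-e^{-t})^n (-1)^ℓ (1/n!) (∏_{i=2}^ℓ L_i)
    ∑_{i=2}^ℓ Γ(n-L_i)/Γ(2-L_i) ∏_{j≠i} 1/(L_i-L_j)
  = 1 + (-1)^ℓ ∑_{i=1}^ℓ e^{-L_i t} ∏_{j ∈ {1,...,ℓ}\{i}} L_j/(L_i-L_j)`.
(The sum on the left runs over `m = n - ℓ ≥ 0`.) -/
theorem mecke_stit_jump_equivalence (ℓ : ℕ) (hℓ : 2 ≤ ℓ) (L : ℕ → ℝ)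
    (hL1 : L 1 = 1)
    (hinj : Set.InjOn L (Finset.Icc 1 ℓ : Finset ℕ))
    (hrange : ∀ i ∈ Finset.Icc 2 ℓ, 0 < L i ∧ L i < ℓ)
    (hint : ∀ i ∈ Finset.Icc 2 ℓ, ∀ m : ℤ, L i ≠ m)
    (t : ℝ) (ht : 0 ≤ t) :
    ∑' m : ℕ,
        (1 - exp (-t)) ^ (m + ℓ) * (-1 : ℝ) ^ ℓ * (1 / ((m + ℓ).factorial : ℝ)) *
          (∏ i ∈ Finset.Icc 2 ℓ, L i) *
          ∑ i ∈ Finset.Icc 2 ℓ,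
            Gamma (((m : ℝ) + ℓ) - L i) / Gamma (2 - L i) *
              ∏ j ∈ (Finset.Icc 2 ℓ).erase i, 1 / (L i - L j)
      = 1 + (-1 : ℝ) ^ ℓ *
          ∑ i ∈ Finset.Icc 1 ℓ, exp (-(L i) * t) *
            ∏ j ∈ (Finset.Icc 1 ℓ).erase i, L j / (L i - L j) :=
  mecke_stit_jump_equivalence_general ℓ hℓ L hL1 hinj hint t ht
end
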